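/- If π is a permutation that is neither 12-decomposable nor 21-decomposable, then the maximal proper blocks of π (maximal sets of consecutive positions whose values form an interval, other than all of π) form a partition of the positions of π, and the relative order of these blocks is an absolutely irreducible permutation. -/
import Mathlib


/-- `b : ℕ → ℕ` (used on `{0,...,k}`) gives a `θ`-decomposition of `π`:
`π` is cut into `k` nonempty consecutive blocks of positions
`[b i, b (i+1))`, each block's set of values is an interval of integers,
and the relative order of the blocks' value intervals agrees with `θ`. -/
structure IsDecomp {n k : ℕ} (π : Equiv.Perm (Fin n)) (θ : Equiv.Perm (Fin k))
    (b : ℕ → ℕ) : Prop where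
  zero : b 0 = 0
  last : b k = n
  mono : ∀ i, i < k → b i < b (i + 1)
  interval : ∀ i, i < k → ∃ lo : ℕ, ∀ p : Fin n, b i ≤ (p : ℕ) → (p : ℕ) < b (i + 1) →
    lo ≤ (π p : ℕ) ∧ (π p : ℕ) < lo + (b (i + 1) - b i)
  order : ∀ i j : Fin k, θ i < θ j → ∀ p q : Fin n,
    b (i : ℕ) ≤ (p : ℕ) → (p : ℕ) < b ((i : ℕ) + 1) →
    b (j : ℕ) ≤ (q : ℕ) → (q : ℕ) < b ((j : ℕ) + 1) → π p < π q

/-- `π` is `θ`-decomposable if some sequence of breakpoints realises a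
`θ`-decomposition of `π`. -/
def Decomposable {n k : ℕ} (π : Equiv.Perm (Fin n)) (θ : Equiv.Perm (Fin k)) : Prop :=
  ∃ b : ℕ → ℕ, IsDecomp π θ b

/-- The positions `[a, b)` form a block of `π`: a nonempty set of consecutive
positions whose values form an interval of integers. -/
def IsBlock {n : ℕ} (π : Equiv.Perm (Fin n)) (a b : ℕ) : Prop :=
  a < b ∧ b ≤ n ∧ ∃ lo : ℕ, ∀ p : Fin n, a ≤ (p : ℕ) → (p : ℕ) < b →
    lo ≤ (π p : ℕ) ∧ (π p : ℕ) < lo + (b - a)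

/-- A proper block: a block which is not the whole of `π`. -/
def ProperBlock {n : ℕ} (π : Equiv.Perm (Fin n)) (a b : ℕ) : Prop :=
  IsBlock π a b ∧ ¬ (a = 0 ∧ b = n)

/-- A permutation is absolutely irreducible (simple) if it has no proper block
consisting of at least two consecutive positions whose values form an interval. -/
def AbsIrred {n : ℕ} (π : Equiv.Perm (Fin n)) : Prop :=
  ¬ ∃ a b : ℕ, a + 2 ≤ b ∧ ProperBlock π a b

/-- A maximal proper block: a proper block not contained in a larger proper block. -/
def MaxProperBlock {n : ℕ} (π : Equiv.Perm (Fin n)) (a b : ℕ) : Prop :=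
  ProperBlock π a b ∧
    ∀ a' b' : ℕ, ProperBlock π a' b' → a' ≤ a → b ≤ b' → a' = a ∧ b' = b

/-- `π` is 12-decomposable: some proper prefix of positions carries exactly the
smallest values (first block entirely below the second). -/
def TwelveDec {n : ℕ} (π : Equiv.Perm (Fin n)) : Prop :=
  ∃ m : ℕ, 0 < m ∧ m < n ∧ ∀ p : Fin n, ((p : ℕ) < m ↔ (π p : ℕ) < m)

/-- `π` is 21-decomposable: some proper suffix of positions carries exactly the
smallest values (first block entirely above the second). -/
def TwentyOneDec {n : ℕ} (π : Equiv.Perm (Fin n)) : Prop :=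
  ∃ m : ℕ, 0 < m ∧ m < n ∧ ∀ p : Fin n, (m ≤ (p : ℕ) ↔ (π p : ℕ) < n - m)

open Finset

lemma block_surj {n : ℕ} (π : Equiv.Perm (Fin n)) {a b lo : ℕ}
    (hab : a < b) (hbn : b ≤ n)
    (h : ∀ p : Fin n, a ≤ (p:ℕ) → (p:ℕ) < b → lo ≤ (π p : ℕ) ∧ (π p : ℕ) < lo + (b - a)) :
    lo + (b - a) ≤ n ∧
    ∀ v : ℕ, lo ≤ v → v < lo + (b - a) →
      ∃ p : Fin n, a ≤ (p:ℕ) ∧ (p:ℕ) < b ∧ (π p : ℕ) = v := by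
  classical
  set S : Finset (Fin n) := univ.filter (fun p => a ≤ (p:ℕ) ∧ (p:ℕ) < b) with hS
  have hSval : S.image Fin.val = Finset.Ico a b := by
    ext v
    simp only [hS, mem_image, mem_filter, mem_univ, true_and, Finset.mem_Ico]
    constructor
    · rintro ⟨p, ⟨h1, h2⟩, rfl⟩; exact ⟨h1, h2⟩
    · rintro ⟨h1, h2⟩; exact ⟨⟨v, lt_of_lt_of_le h2 hbn⟩, ⟨h1, h2⟩, rfl⟩
  have hScard : S.card = b - a := by
    rw [← Finset.card_image_of_injective S Fin.val_injective, hSval, Nat.card_Ico]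
  set T : Finset (Fin n) := S.image π with hT
  have hTcard : T.card = b - a := by
    rw [hT, Finset.card_image_of_injective S π.injective, hScard]
  set T' : Finset (Fin n) := univ.filter (fun v => lo ≤ (v:ℕ) ∧ (v:ℕ) < lo + (b - a)) with hT'
  have hTT' : T ⊆ T' := by
    intro v hv
    rw [hT, mem_image] at hv
    obtain ⟨p, hp, rfl⟩ := hv
    rw [hS, mem_filter] at hp
    simp only [hT', mem_filter, mem_univ, true_and]
    exact h p hp.2.1 hp.2.2
  have hT'val : T'.image Fin.val ⊆ Finset.Ico lo (lo + (b - a)) := by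
    intro v hv
    simp only [hT', mem_image, mem_filter, mem_univ, true_and] at hv
    obtain ⟨p, ⟨h1, h2⟩, rfl⟩ := hv
    exact Finset.mem_Ico.mpr ⟨h1, h2⟩
  have hT'card : T'.card ≤ b - a := by
    calc T'.card = (T'.image Fin.val).card :=
          (Finset.card_image_of_injective T' Fin.val_injective).symm
      _ ≤ (Finset.Ico lo (lo + (b - a))).card := Finset.card_le_card hT'val
      _ = b - a := by rw [Nat.card_Ico]; omega
  have hTeq : T = T' := Finset.eq_of_subset_of_card_le hTT' (by omega)
  have hvaleq : T'.image Fin.val = Finset.Ico lo (lo + (b - a)) := by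
    apply Finset.eq_of_subset_of_card_le hT'val
    rw [Nat.card_Ico, Finset.card_image_of_injective T' Fin.val_injective, ← hTeq, hTcard]
    omega
  constructor
  · have : lo + (b - a) - 1 ∈ T'.image Fin.val := by
      rw [hvaleq]; rw [Finset.mem_Ico]; omega
    rw [mem_image] at this
    obtain ⟨p, _, hp⟩ := this
    have := p.isLt; omega
  · intro v hv1 hv2
    have : v ∈ T'.image Fin.val := by rw [hvaleq, Finset.mem_Ico]; exact ⟨hv1, hv2⟩
    rw [mem_image] at this
    obtain ⟨w, hw, rfl⟩ := this
    rw [← hTeq, hT, mem_image] at hw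
    obtain ⟨p, hp, rfl⟩ := hw
    rw [hS, mem_filter] at hp
    exact ⟨p, hp.2.1, hp.2.2, rfl⟩

lemma union_block {n : ℕ} (π : Equiv.Perm (Fin n)) {a b c d lo1 lo2 : ℕ}
    (hac : a ≤ c) (hcb : c < b) (hbd : b ≤ d) (hdn : d ≤ n)
    (h1 : ∀ p : Fin n, a ≤ (p:ℕ) → (p:ℕ) < b → lo1 ≤ (π p : ℕ) ∧ (π p : ℕ) < lo1 + (b - a))
    (h2 : ∀ p : Fin n, c ≤ (p:ℕ) → (p:ℕ) < d → lo2 ≤ (π p : ℕ) ∧ (π p : ℕ) < lo2 + (d - c)) :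
    IsBlock π a d := by
  classical
  have hab : a < b := lt_of_le_of_lt hac hcb
  have hcd : c < d := lt_of_lt_of_le hcb hbd
  obtain ⟨hbd1, hsurj1⟩ := block_surj π hab (le_trans hbd hdn) h1
  obtain ⟨hbd2, hsurj2⟩ := block_surj π hcd hdn h2
  set m := min lo1 lo2 with hm
  set M := max (lo1 + (b - a)) (lo2 + (d - c)) with hM
  -- overlap point
  have hq : ∃ q : Fin n, (q:ℕ) = c := ⟨⟨c, lt_of_lt_of_le hcd hdn⟩, rfl⟩
  obtain ⟨q, hqc⟩ := hq
  have hq1 := h1 q (by omega) (by omega)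
  have hq2 := h2 q (by omega) (by omega)
  have hov1 : lo2 < lo1 + (b - a) := by omega
  have hov2 : lo1 < lo2 + (d - c) := by omega
  -- every position in [a,d) has value in [m, M)
  have hval : ∀ p : Fin n, a ≤ (p:ℕ) → (p:ℕ) < d → m ≤ (π p : ℕ) ∧ (π p : ℕ) < M := by
    intro p hp1 hp2
    rcases lt_or_ge (p:ℕ) b with hb' | hb'
    · have := h1 p hp1 hb'; omega
    · have := h2 p (by omega) hp2; omega
  -- d - a ≤ M - m via injection of positions into value range
  have hcount1 : d - a ≤ M - m := by
    set S : Finset (Fin n) := univ.filter (fun p => a ≤ (p:ℕ) ∧ (p:ℕ) < d) with hS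
    have hSval : S.image Fin.val = Finset.Ico a d := by
      ext v
      simp only [hS, mem_image, mem_filter, mem_univ, true_and, Finset.mem_Ico]
      constructor
      · rintro ⟨p, ⟨u1, u2⟩, rfl⟩; exact ⟨u1, u2⟩
      · rintro ⟨u1, u2⟩; exact ⟨⟨v, lt_of_lt_of_le u2 hdn⟩, ⟨u1, u2⟩, rfl⟩
    have hScard : S.card = d - a := by
      rw [← Finset.card_image_of_injective S Fin.val_injective, hSval, Nat.card_Ico]
    have himg : (S.image π).image Fin.val ⊆ Finset.Ico m M := by
      intro v hv
      simp only [mem_image] at hv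
      obtain ⟨w, ⟨p, hp, rfl⟩, rfl⟩ := hv
      rw [hS, mem_filter] at hp
      exact Finset.mem_Ico.mpr (hval p hp.2.1 hp.2.2)
    have : S.card ≤ (Finset.Ico m M).card := by
      calc S.card = ((S.image π).image Fin.val).card := by
            rw [Finset.card_image_of_injective _ Fin.val_injective,
              Finset.card_image_of_injective _ π.injective]
        _ ≤ _ := Finset.card_le_card himg
    rw [hScard, Nat.card_Ico] at this; exact this
  -- M - m ≤ d - a via injection of values into positions
  have hcount2 : M - m ≤ d - a := by
    set S : Finset (Fin n) := univ.filter (fun p => a ≤ (p:ℕ) ∧ (p:ℕ) < d) with hS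
    have hsub : Finset.Ico m M ⊆ (S.image π).image Fin.val := by
      intro v hv
      rw [Finset.mem_Ico] at hv
      have hpick : ∃ p : Fin n, a ≤ (p:ℕ) ∧ (p:ℕ) < d ∧ (π p : ℕ) = v := by
        rcases le_or_gt lo1 v with hv1 | hv1
        · rcases lt_or_ge v (lo1 + (b - a)) with hv2 | hv2
          · obtain ⟨p, u1, u2, u3⟩ := hsurj1 v hv1 hv2
            exact ⟨p, u1, by omega, u3⟩
          · obtain ⟨p, u1, u2, u3⟩ := hsurj2 v (by omega) (by omega)
            exact ⟨p, by omega, u2, u3⟩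
        · obtain ⟨p, u1, u2, u3⟩ := hsurj2 v (by omega) (by omega)
          exact ⟨p, by omega, u2, u3⟩
      obtain ⟨p, u1, u2, u3⟩ := hpick
      simp only [mem_image]
      exact ⟨π p, ⟨p, by simp [hS, u1, u2], rfl⟩, u3⟩
    have := Finset.card_le_card hsub
    rw [Nat.card_Ico, Finset.card_image_of_injective _ Fin.val_injective,
      Finset.card_image_of_injective _ π.injective] at this
    have hScard : S.card ≤ d - a := by
      have : S.image Fin.val ⊆ Finset.Ico a d := by
        intro v hv
        simp only [hS, mem_image, mem_filter, mem_univ, true_and] at hv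
        obtain ⟨p, ⟨u1, u2⟩, rfl⟩ := hv
        exact Finset.mem_Ico.mpr ⟨u1, u2⟩
      have h2 := Finset.card_le_card this
      rw [Nat.card_Ico, Finset.card_image_of_injective _ Fin.val_injective] at h2
      exact h2
    omega
  refine ⟨lt_of_lt_of_le hab hbd, hdn, m, fun p hp1 hp2 => ?_⟩
  have := hval p hp1 hp2
  constructor
  · exact this.1
  · have : (π p : ℕ) < M := this.2
    omega

lemma max_blocks_eq_aux {n : ℕ} (hn : 2 ≤ n) (π : Equiv.Perm (Fin n))
    (h12 : ¬ TwelveDec π) (h21 : ¬ TwentyOneDec π) {a b c d : ℕ}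
    (hA : MaxProperBlock π a b) (hB : MaxProperBlock π c d) (p : Fin n)
    (hpa : a ≤ (p:ℕ)) (hpb : (p:ℕ) < b) (hpc : c ≤ (p:ℕ)) (hpd : (p:ℕ) < d)
    (hac : a ≤ c) : a = c ∧ b = d := by
  obtain ⟨⟨⟨hab, hbn, lo1, h1⟩, hApr⟩, hAmax⟩ := hA
  obtain ⟨⟨⟨hcd, hdn, lo2, h2⟩, hBpr⟩, hBmax⟩ := hB
  have hcb : c < b := lt_of_le_of_lt hpc hpb
  rcases le_or_gt d b with hdb | hbd
  · exact hBmax a b ⟨⟨hab, hbn, lo1, h1⟩, hApr⟩ hac hdb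
  · -- b < d : overlapping, union is a block
    have hU : IsBlock π a d := union_block π hac hcb (le_of_lt hbd) hdn h1 h2
    by_cases hUpr : ¬ (a = 0 ∧ d = n)
    · have := hAmax a d ⟨hU, hUpr⟩ le_rfl (le_of_lt hbd)
      omega
    · push_neg at hUpr
      obtain ⟨rfl, hdn'⟩ := hUpr  -- a = 0, d = n
      subst hdn'
      exfalso
      have hc0 : 0 < c := by
        rcases Nat.eq_zero_or_pos c with rfl | h
        · exact (hBpr ⟨rfl, rfl⟩).elim
        · exact h
      have hblt : b < d := hbd
      obtain ⟨hbd1, hsurj1⟩ := block_surj π hab hbn h1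
      obtain ⟨hbd2, hsurj2⟩ := block_surj π hcd hdn h2
      simp only [Nat.sub_zero] at hbd1 hsurj1 h1
      -- keyA : position < b iff value in V1
      have keyA : ∀ q : Fin d, (q:ℕ) < b ↔ (lo1 ≤ (π q : ℕ) ∧ (π q : ℕ) < lo1 + b) := by
        intro q
        constructor
        · intro hq; exact h1 q (Nat.zero_le _) hq
        · rintro ⟨u1, u2⟩
          by_contra hq
          obtain ⟨r, _, hr2, hr3⟩ := hsurj1 (π q : ℕ) u1 u2
          have : r = q := π.injective (Fin.ext hr3)
          omega
      have keyB : ∀ q : Fin d, c ≤ (q:ℕ) ↔ (lo2 ≤ (π q : ℕ) ∧ (π q : ℕ) < lo2 + (d - c)) := by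
        intro q
        constructor
        · intro hq; exact h2 q hq (lt_of_lt_of_le q.isLt hdn)
        · rintro ⟨u1, u2⟩
          by_contra hq
          obtain ⟨r, hr1, _, hr3⟩ := hsurj2 (π q : ℕ) u1 u2
          have : r = q := π.injective (Fin.ext hr3)
          omega
      by_cases hlo2 : lo2 = 0
      · subst hlo2
        refine h21 ⟨c, hc0, by omega, fun q => ?_⟩
        have := keyB q
        have := (π q).isLt
        constructor
        · intro h'; have := (keyB q).mp h'; omega
        · intro h'; by_contra h''
          have := (keyB q).mpr (by omega); omega
      by_cases hlo2' : lo2 + (d - c) = d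
      · refine h12 ⟨c, hc0, by omega, fun q => ?_⟩
        have hqlt := (π q).isLt
        have hlo2c : lo2 = c := by omega
        constructor
        · intro h'
          by_contra h''
          have : c ≤ (q:ℕ) := (keyB q).mpr (by omega)
          omega
        · intro h'
          by_contra h''
          have := (keyB q).mp (by omega)
          omega
      by_cases hlo1 : lo1 = 0
      · subst hlo1
        refine h12 ⟨b, by omega, by omega, fun q => ?_⟩
        have := keyA q
        constructor
        · intro h'; have := (keyA q).mp h'; omega
        · intro h'; by_contra h''
          have := (keyA q).mpr (by omega); omega
      by_cases hlo1' : lo1 + b = d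
      · refine h21 ⟨b, by omega, by omega, fun q => ?_⟩
        have hqlt := (π q).isLt
        constructor
        · intro h'
          by_contra h''
          have : (q:ℕ) < b := (keyA q).mpr (by omega)
          omega
        · intro h'
          have : ¬ ((q:ℕ) < b) := by
            intro h''
            have := (keyA q).mp h''
            omega
          omega
      · -- all interior: contradiction
        obtain ⟨q1, hq1⟩ : ∃ q : Fin d, (π q : ℕ) = lo2 - 1 :=
          ⟨π.symm ⟨lo2 - 1, by omega⟩, by simp⟩
        obtain ⟨q2, hq2⟩ : ∃ q : Fin d, (π q : ℕ) = lo1 - 1 :=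
          ⟨π.symm ⟨lo1 - 1, by omega⟩, by simp⟩
        have hq1c : ¬ c ≤ (q1:ℕ) := by
          rw [keyB q1]; omega
        have hq1V1 := (keyA q1).mp (by omega)
        have hq2b : ¬ (q2:ℕ) < b := by
          rw [keyA q2]; omega
        have hq2V2 := (keyB q2).mp (by omega)
        omega

lemma max_blocks_eq {n : ℕ} (hn : 2 ≤ n) (π : Equiv.Perm (Fin n))
    (h12 : ¬ TwelveDec π) (h21 : ¬ TwentyOneDec π) {a b c d : ℕ}
    (hA : MaxProperBlock π a b) (hB : MaxProperBlock π c d) (p : Fin n)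
    (hpa : a ≤ (p:ℕ)) (hpb : (p:ℕ) < b) (hpc : c ≤ (p:ℕ)) (hpd : (p:ℕ) < d) :
    a = c ∧ b = d := by
  rcases le_total a c with h | h
  · exact max_blocks_eq_aux hn π h12 h21 hA hB p hpa hpb hpc hpd h
  · have := max_blocks_eq_aux hn π h12 h21 hB hA p hpc hpd hpa hpb h
    exact ⟨this.1.symm, this.2.symm⟩

lemma exists_max_block {n : ℕ} (hn : 2 ≤ n) (π : Equiv.Perm (Fin n)) (p : Fin n) :
    ∃ a b : ℕ, MaxProperBlock π a b ∧ a ≤ (p:ℕ) ∧ (p:ℕ) < b := by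
  classical
  set S : Finset (ℕ × ℕ) := (Finset.range (n+1) ×ˢ Finset.range (n+1)).filter
    (fun x => ProperBlock π x.1 x.2 ∧ x.1 ≤ (p:ℕ) ∧ (p:ℕ) < x.2) with hS
  have hsing : ((p:ℕ), (p:ℕ)+1) ∈ S := by
    have hpn := p.isLt
    rw [hS, Finset.mem_filter]
    refine ⟨Finset.mem_product.mpr ⟨Finset.mem_range.mpr (by omega),
      Finset.mem_range.mpr (by omega)⟩, ⟨⟨by omega, by omega, (π p : ℕ), ?_⟩, ?_⟩, le_rfl, by omega⟩
    · intro q hq1 hq2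
      have : (q:ℕ) = (p:ℕ) := by omega
      have : q = p := Fin.ext this
      subst this
      omega
    · rintro ⟨h1, h2⟩
      omega
  obtain ⟨x, hx, hmax⟩ := S.exists_max_image (fun x => x.2 - x.1) ⟨_, hsing⟩
  rw [hS, Finset.mem_filter] at hx
  obtain ⟨hxr, hxpr, hx1, hx2⟩ := hx
  refine ⟨x.1, x.2, ⟨hxpr, ?_⟩, hx1, hx2⟩
  intro a' b' hpr' ha' hb'
  have hab' : a' < b' := hpr'.1.1
  have hbn' : b' ≤ n := hpr'.1.2.1
  have hx12 : x.1 < x.2 := hxpr.1.1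
  have hmem : (a', b') ∈ S := by
    rw [hS, Finset.mem_filter]
    exact ⟨Finset.mem_product.mpr ⟨Finset.mem_range.mpr (by omega),
      Finset.mem_range.mpr (by omega)⟩, hpr', by omega, by omega⟩
  have := hmax _ hmem
  simp only at this
  omega

lemma card_filter_Ico {n : ℕ} (a b : ℕ) (hbn : b ≤ n) :
    ((Finset.univ : Finset (Fin n)).filter (fun p : Fin n => a ≤ (p:ℕ) ∧ (p:ℕ) < b)).card = b - a := by
  classical
  set S := (Finset.univ : Finset (Fin n)).filter (fun p : Fin n => a ≤ (p:ℕ) ∧ (p:ℕ) < b) with hS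
  have hSval : S.image Fin.val = Finset.Ico a b := by
    ext v
    simp only [hS, mem_image, mem_filter, mem_univ, true_and, Finset.mem_Ico]
    constructor
    · rintro ⟨p, ⟨h1, h2⟩, rfl⟩; exact ⟨h1, h2⟩
    · rintro ⟨h1, h2⟩; exact ⟨⟨v, lt_of_lt_of_le h2 hbn⟩, ⟨h1, h2⟩, rfl⟩
  rw [← Finset.card_image_of_injective S Fin.val_injective, hSval, Nat.card_Ico]

lemma locate (g : ℕ → ℕ) : ∀ c a, a < c → ∀ x, g a ≤ x → x < g c →
    ∃ j, a ≤ j ∧ j < c ∧ g j ≤ x ∧ x < g (j+1) := by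
  intro c
  induction c with
  | zero => omega
  | succ c ih =>
    intro a hac x hx1 hx2
    rcases le_or_gt (g c) x with h | h
    · exact ⟨c, by omega, by omega, h, hx2⟩
    · rcases Nat.lt_or_ge a c with h' | h'
      · obtain ⟨j, u1, u2, u3, u4⟩ := ih a h' x hx1 h
        exact ⟨j, u1, by omega, u3, u4⟩
      · have : a = c := by omega
        subst this
        omega

def iterB (n : ℕ) (f : Fin n → ℕ) : ℕ → ℕ
  | 0 => 0
  | i + 1 => if h : iterB n f i < n then f ⟨iterB n f i, h⟩ else n

/-- If `π` (of length at least 2) is neither 12-decomposable nor 21-decomposable,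
then its maximal proper blocks partition its positions, and the relative order of
these blocks is an absolutely irreducible permutation. -/
theorem maximal_blocks_partition (n : ℕ) (hn : 2 ≤ n) (π : Equiv.Perm (Fin n))
    (h12 : ¬ TwelveDec π) (h21 : ¬ TwentyOneDec π) :
    (∀ p : Fin n, ∃ a b : ℕ, MaxProperBlock π a b ∧ a ≤ (p : ℕ) ∧ (p : ℕ) < b ∧
      ∀ a' b' : ℕ, MaxProperBlock π a' b' → a' ≤ (p : ℕ) → (p : ℕ) < b' →
        a' = a ∧ b' = b) ∧
    (∃ (k : ℕ) (θ : Equiv.Perm (Fin k)) (b : ℕ → ℕ), AbsIrred θ ∧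
      IsDecomp π θ b ∧ ∀ i, i < k → MaxProperBlock π (b i) (b (i + 1))) := by
  classical
  have hpart : ∀ p : Fin n, ∃ a b : ℕ, MaxProperBlock π a b ∧ a ≤ (p:ℕ) ∧ (p:ℕ) < b ∧
      ∀ a' b' : ℕ, MaxProperBlock π a' b' → a' ≤ (p:ℕ) → (p:ℕ) < b' → a' = a ∧ b' = b := by
    intro p
    obtain ⟨a, b, hm, h1, h2⟩ := exists_max_block hn π p
    exact ⟨a, b, hm, h1, h2, fun a' b' hm' h1' h2' =>
      max_blocks_eq hn π h12 h21 hm' hm p h1' h2' h1 h2⟩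
  refine ⟨hpart, ?_⟩
  choose A B hmb hAle hltB hun using hpart
  have hBle : ∀ p : Fin n, B p ≤ n := fun p => (hmb p).1.1.2.1
  set g : ℕ → ℕ := iterB n B with hgdef
  have hg0 : g 0 = 0 := rfl
  have hgs : ∀ i, g (i+1) = if h : g i < n then B ⟨g i, h⟩ else n := fun i => rfl
  have hinv : ∀ i, g i ≤ n ∧ (∀ h : g i < n, A ⟨g i, h⟩ = g i) := by
    intro i
    induction i with
    | zero =>
      refine ⟨Nat.zero_le n, fun h => ?_⟩
      have h2 := hAle ⟨g 0, h⟩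
      have h3 : ((⟨g 0, h⟩ : Fin n) : ℕ) = g 0 := rfl
      omega
    | succ i ih =>
      rw [hgs]
      by_cases h : g i < n
      · simp only [dif_pos h]
        refine ⟨hBle _, fun h' => ?_⟩
        by_contra hne
        set x := B ⟨g i, h⟩ with hx
        have hAx : A ⟨x, h'⟩ < x := lt_of_le_of_ne (hAle ⟨x, h'⟩) hne
        have hgx : g i < x := hltB ⟨g i, h⟩
        set r : Fin n := ⟨x - 1, by omega⟩ with hr
        have hrx : (r:ℕ) = x - 1 := rfl
        have hBx : x < B ⟨x, h'⟩ := hltB ⟨x, h'⟩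
        have h1 := hun r (A ⟨x, h'⟩) (B ⟨x, h'⟩) (hmb ⟨x, h'⟩) (by omega) (by omega)
        have hmbgi : MaxProperBlock π (g i) x := by
          have := hmb ⟨g i, h⟩
          rwa [ih.2 h] at this
        have h2 := hun r (g i) x hmbgi (by omega) (by omega)
        omega
      · simp only [dif_neg h]
        exact ⟨le_rfl, fun h' => absurd h' (lt_irrefl n)⟩
  have hgle : ∀ i, g i ≤ n := fun i => (hinv i).1
  have hstep : ∀ i, g i < n → g i < g (i+1) := by
    intro i h; rw [hgs, dif_pos h]; exact hltB ⟨g i, h⟩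
  have hgi : ∀ i, i ≤ n → i ≤ g i := by
    intro i
    induction i with
    | zero => omega
    | succ i ih =>
      intro h
      have := ih (by omega)
      rcases lt_or_ge (g i) n with h' | h'
      · have := hstep i h'; omega
      · rw [hgs, dif_neg (by omega)]; omega
  have hgn : g n = n := le_antisymm (hgle n) (hgi n le_rfl)
  have hex : ∃ i, g i = n := ⟨n, hgn⟩
  set k := Nat.find hex with hk
  have hgk : g k = n := Nat.find_spec hex
  have hltn : ∀ i, i < k → g i < n := fun i hi =>
    lt_of_le_of_ne (hgle i) (Nat.find_min hex hi)
  have hmono : ∀ i, i < k → g i < g (i+1) := fun i hi => hstep i (hltn i hi)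
  have hk0 : 0 < k := by
    rcases Nat.eq_zero_or_pos k with h | h
    · exfalso; rw [h] at hgk; rw [hg0] at hgk; omega
    · exact h
  have hgmono : ∀ j, j ≤ k → ∀ i, i ≤ j → g i ≤ g j := by
    intro j
    induction j with
    | zero =>
      intro _ i hi
      have : i = 0 := by omega
      subst this
      exact le_rfl
    | succ j ih =>
      intro hjk i hi
      rcases Nat.eq_or_lt_of_le hi with rfl | hi'
      · exact le_rfl
      · have h1 := ih (by omega) i (by omega)
        have h2 := hmono j (by omega)
        omega
  have hgsmono : ∀ i j, i < j → j ≤ k → g i < g j := by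
    intro i j hij hjk
    have h1 := hgmono (j-1) (by omega) i (by omega)
    have h2 := hmono (j-1) (by omega)
    have h3 : j - 1 + 1 = j := by omega
    rw [h3] at h2
    omega
  have hblk : ∀ i, i < k → MaxProperBlock π (g i) (g (i+1)) := by
    intro i hi
    have h := hltn i hi
    have hthis := hmb ⟨g i, h⟩
    rw [(hinv i).2 h] at hthis
    rw [hgs, dif_pos h]
    exact hthis
  choose lo hlo using fun i : Fin k => (hblk i i.isLt).1.1.2.2
  have hbs := fun i : Fin k => block_surj π (hmono i i.isLt) (hgle _) (hlo i)
  -- tiling: every value lies in some block's interval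
  have htile : ∀ v : Fin n, ∃ j : Fin k,
      lo j ≤ (v:ℕ) ∧ (v:ℕ) < lo j + (g ((j:ℕ)+1) - g (j:ℕ)) := by
    intro v
    set p := π.symm v with hp
    obtain ⟨j, u1, u2, u3, u4⟩ := locate g k 0 hk0 (p:ℕ) (by rw [hg0]; omega)
      (by rw [hgk]; exact p.isLt)
    refine ⟨⟨j, u2⟩, ?_⟩
    have := hlo ⟨j, u2⟩ p u3 u4
    simpa [hp] using this
  -- distinct blocks have disjoint value intervals
  have hdisj : ∀ i j : Fin k, ∀ v : ℕ,
      lo i ≤ v → v < lo i + (g ((i:ℕ)+1) - g (i:ℕ)) →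
      lo j ≤ v → v < lo j + (g ((j:ℕ)+1) - g (j:ℕ)) → i = j := by
    intro i j v hi1 hi2 hj1 hj2
    obtain ⟨p, hp1, hp2, hp3⟩ := (hbs i).2 v hi1 hi2
    obtain ⟨q, hq1, hq2, hq3⟩ := (hbs j).2 v hj1 hj2
    have hpq : p = q := π.injective (Fin.ext (by omega))
    subst hpq
    rcases lt_trichotomy (i:ℕ) (j:ℕ) with h | h | h
    · exfalso
      have := hgmono (j:ℕ) (le_of_lt j.isLt) ((i:ℕ)+1) (by omega)
      omega
    · exact Fin.ext h
    · exfalso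
      have := hgmono (i:ℕ) (le_of_lt i.isLt) ((j:ℕ)+1) (by omega)
      omega
  have hloinj : Function.Injective lo := by
    intro i j hij
    exact hdisj i j (lo i) le_rfl (by have := hmono i i.isLt; omega)
      (by omega) (by have := hmono j j.isLt; omega)
  have hcmp : ∀ i j : Fin k, lo i < lo j → lo i + (g ((i:ℕ)+1) - g (i:ℕ)) ≤ lo j := by
    intro i j hij
    by_contra hcon
    have : i = j := hdisj i j (lo j) (by omega) (by omega) le_rfl
      (by have := hmono j j.isLt; omega)
    subst this
    omega
  -- rank function
  have hfcard : ∀ i : Fin k, ((Finset.univ : Finset (Fin k)).filter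
      (fun j => lo j < lo i)).card < k := by
    intro i
    have h1 : ((Finset.univ : Finset (Fin k)).filter (fun j => lo j < lo i)) ⊆
        Finset.univ.erase i := by
      intro j hj
      rw [Finset.mem_filter] at hj
      rw [Finset.mem_erase]
      refine ⟨fun hji => ?_, Finset.mem_univ j⟩
      subst hji
      omega
    calc _ ≤ (Finset.univ.erase i).card := Finset.card_le_card h1
      _ = k - 1 := by
          rw [Finset.card_erase_of_mem (Finset.mem_univ i), Finset.card_univ,
            Fintype.card_fin]
      _ < k := by omega
  set f : Fin k → Fin k := fun i => ⟨_, hfcard i⟩ with hfdef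
  have hfmono : ∀ i j : Fin k, lo i < lo j → f i < f j := by
    intro i j hij
    have hsub : ((Finset.univ : Finset (Fin k)).filter (fun m => lo m < lo i)) ⊆
        ((Finset.univ : Finset (Fin k)).filter (fun m => lo m < lo j)) := by
      intro m hm
      rw [Finset.mem_filter] at hm ⊢
      exact ⟨hm.1, by omega⟩
    have hss : ((Finset.univ : Finset (Fin k)).filter (fun m => lo m < lo i)) ⊂
        ((Finset.univ : Finset (Fin k)).filter (fun m => lo m < lo j)) := by
      rw [Finset.ssubset_iff_of_subset hsub]
      exact ⟨i, by rw [Finset.mem_filter]; exact ⟨Finset.mem_univ i, hij⟩,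
        by rw [Finset.mem_filter]; push_neg; intro _; omega⟩
    exact Finset.card_lt_card hss
  have hfinj : Function.Injective f := by
    intro i j hij
    by_contra hne
    have hlone : lo i ≠ lo j := fun h => hne (hloinj h)
    rcases lt_or_gt_of_ne hlone with h | h
    · have := hfmono i j h; rw [hij] at this; exact lt_irrefl _ this
    · have := hfmono j i h; rw [hij] at this; exact lt_irrefl _ this
  set θ : Equiv.Perm (Fin k) := Equiv.ofBijective f
    (Finite.injective_iff_bijective.mp hfinj) with hθdef
  have hθapp : ∀ i, θ i = f i := fun i => rfl
  have hθrev : ∀ i j : Fin k, θ i < θ j → lo i < lo j := by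
    intro i j hij
    rcases lt_trichotomy (lo i) (lo j) with h | h | h
    · exact h
    · exfalso; have : i = j := hloinj h; subst this; exact lt_irrefl _ hij
    · exfalso
      have := hfmono j i h
      rw [← hθapp, ← hθapp] at this
      exact lt_irrefl _ (lt_trans hij this)
  -- absolute irreducibility of the quotient
  have habs : AbsIrred θ := by
    rintro ⟨a, c, hac2, ⟨⟨hac, hck, lo', hblkθ⟩, hproper⟩⟩
    obtain ⟨hlok, hsurθ⟩ := block_surj θ hac hck hblkθ
    have hgac : g a < g c := hgsmono a c (by omega) hck
    have hgcn : g c ≤ n := by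
      have := hgmono k le_rfl c hck
      omega
    set W : Finset (Fin n) :=
      Finset.univ.filter (fun p : Fin n => g a ≤ (p:ℕ) ∧ (p:ℕ) < g c) with hW
    set V : Finset (Fin n) := W.image π with hV
    have hVcard : V.card = g c - g a := by
      rw [hV, Finset.card_image_of_injective _ π.injective, hW, card_filter_Ico _ _ hgcn]
    have hVmem : ∀ v : Fin n, v ∈ V ↔
        ∃ p : Fin n, g a ≤ (p:ℕ) ∧ (p:ℕ) < g c ∧ π p = v := by
      intro v
      rw [hV, Finset.mem_image]
      constructor
      · rintro ⟨p, hp, rfl⟩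
        rw [hW, Finset.mem_filter] at hp
        exact ⟨p, hp.2.1, hp.2.2, rfl⟩
      · rintro ⟨p, h1, h2, rfl⟩
        exact ⟨p, by rw [hW, Finset.mem_filter]; exact ⟨Finset.mem_univ _, h1, h2⟩, rfl⟩
    have hVblock : ∀ v : Fin n, v ∈ V → ∃ j : Fin k, a ≤ (j:ℕ) ∧ (j:ℕ) < c ∧
        lo j ≤ (v:ℕ) ∧ (v:ℕ) < lo j + (g ((j:ℕ)+1) - g (j:ℕ)) := by
      intro v hv
      obtain ⟨p, h1, h2, rfl⟩ := (hVmem v).mp hv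
      obtain ⟨j, u1, u2, u3, u4⟩ := locate g c a (by omega) (p:ℕ) h1 h2
      have hjk : j < k := by omega
      exact ⟨⟨j, hjk⟩, u1, u2, hlo ⟨j, hjk⟩ p u3 u4⟩
    have hblockV : ∀ (j : Fin k) (v : Fin n), a ≤ (j:ℕ) → (j:ℕ) < c →
        lo j ≤ (v:ℕ) → (v:ℕ) < lo j + (g ((j:ℕ)+1) - g (j:ℕ)) → v ∈ V := by
      intro j v hj1 hj2 hv1 hv2
      obtain ⟨p, u1, u2, u3⟩ := (hbs j).2 (v:ℕ) hv1 hv2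
      rw [hVmem]
      refine ⟨p, ?_, ?_, Fin.ext u3⟩
      · have := hgmono (j:ℕ) (le_of_lt j.isLt) a hj1
        omega
      · have := hgmono c hck ((j:ℕ)+1) (by omega)
        omega
    have hrank2 : ∀ j : Fin k, lo' ≤ (θ j : ℕ) → (θ j : ℕ) < lo' + (c - a) →
        a ≤ (j:ℕ) ∧ (j:ℕ) < c := by
      intro j h1 h2
      obtain ⟨t, u1, u2, u3⟩ := hsurθ (θ j : ℕ) h1 h2
      have : t = j := θ.injective (Fin.ext u3)
      subst this
      exact ⟨u1, u2⟩
    have hconv : ∀ v1 v2 u : Fin n, v1 ∈ V → v2 ∈ V →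
        (v1:ℕ) ≤ (u:ℕ) → (u:ℕ) ≤ (v2:ℕ) → u ∈ V := by
      intro v1 v2 u hv1 hv2 h1 h2
      obtain ⟨r1, a1, c1, l1, m1⟩ := hVblock v1 hv1
      obtain ⟨r2, a2, c2, l2, m2⟩ := hVblock v2 hv2
      obtain ⟨r, lr, mr⟩ := htile u
      have h3 : lo r1 ≤ lo r := by
        by_contra h'
        have := hcmp r r1 (by omega)
        omega
      have h4 : lo r ≤ lo r2 := by
        by_contra h'
        have := hcmp r2 r (by omega)
        omega
      have h5 : (θ r1 : ℕ) ≤ (θ r : ℕ) := by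
        by_contra h'
        have := hθrev r r1 (by rw [Fin.lt_def]; omega)
        omega
      have h6 : (θ r : ℕ) ≤ (θ r2 : ℕ) := by
        by_contra h'
        have := hθrev r2 r (by rw [Fin.lt_def]; omega)
        omega
      have h7 := hblkθ r1 a1 c1
      have h8 := hblkθ r2 a2 c2
      obtain ⟨h9, h10⟩ := hrank2 r (by omega) (by omega)
      exact hblockV r u h9 h10 lr mr
    have hVne : V.Nonempty := by
      rw [← Finset.card_pos, hVcard]
      omega
    set m' := V.min' hVne with hm'
    have hbound : ∀ v : Fin n, v ∈ V →
        (m':ℕ) ≤ (v:ℕ) ∧ (v:ℕ) < (m':ℕ) + (g c - g a) := by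
      intro v hv
      have h1 : (m':ℕ) ≤ (v:ℕ) := V.min'_le v hv
      refine ⟨h1, ?_⟩
      have hsub : Finset.Icc m' v ⊆ V := by
        intro u hu
        rw [Finset.mem_Icc] at hu
        exact hconv m' v u (V.min'_mem hVne) hv hu.1 hu.2
      have hcard := Finset.card_le_card hsub
      rw [hVcard, Fin.card_Icc] at hcard
      omega
    have hUblk : IsBlock π (g a) (g c) := by
      refine ⟨hgac, hgcn, (m':ℕ), fun p hp1 hp2 => ?_⟩
      exact hbound _ ((hVmem (π p)).mpr ⟨p, hp1, hp2, rfl⟩)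
    have hUproper : ¬ (g a = 0 ∧ g c = n) := by
      rintro ⟨h1, h2⟩
      apply hproper
      constructor
      · by_contra ha0
        have := hgsmono 0 a (by omega) (by omega)
        rw [hg0] at this
        omega
      · by_contra hc0
        have := hgsmono c k (by omega) le_rfl
        rw [hgk] at this
        omega
    have hmax := (hblk a (by omega)).2 (g a) (g c) ⟨hUblk, hUproper⟩ le_rfl
      (hgmono c hck (a+1) (by omega))
    have := hgsmono (a+1) c (by omega) hck
    omega
  refine ⟨k, θ, g, habs, ⟨hg0, hgk, hmono, ?_, ?_⟩, hblk⟩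
  · intro i hi
    exact ⟨lo ⟨i, hi⟩, hlo ⟨i, hi⟩⟩
  · intro i j hθij p q hp1 hp2 hq1 hq2
    have hij := hθrev i j hθij
    have hc := hcmp i j hij
    have h1 := hlo i p hp1 hp2
    have h2 := hlo j q hq1 hq2
    rw [Fin.lt_def]
    omega
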